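/- arXiv:2312.16058 — 2 statements merged into one kernel-verified Lean document; each statement's English description precedes it below -/
import Mathlib

section
/- Let G be a Gauss diagram and let −G be the Gauss diagram obtained by reversing the orientation of the underlying arc (which swaps the roles of the two endpoints and reverses the direction of traversal). Then for every chord c with corresponding chord c' in −G: sign(c') = sign(c), i(c') = i(c), l(c') = l(c), r(c') = r(c), and g_{c'}(v) = g_c(v). Consequently F_{−G}(u,v) = F_G(u,v). -/
open Finsupp

/-- Formal Laurent polynomials in `v` over `ℤ`, used as exponents of `u`. -/
abbrev LaurentExp : Type := ℤ →₀ ℤ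

/-- Formal `ℤ`-linear combinations of symbols `u^p`, `p` a Laurent polynomial in `v`. -/
abbrev FPoly : Type := LaurentExp →₀ ℤ

/-- A combinatorial Gauss diagram of a knotoid diagram: `n` signed directed chords,
whose `2*n` endpoints (an over-endpoint and an under-endpoint for each chord) occupy
distinct positions along the oriented arc.  The two endpoints of the arc itself lie
before position `0` and after position `2*n - 1`. -/
structure GaussDiagram where
  n : ℕ
  sign : Fin n → ℤ
  over' : Fin n → Fin (2 * n)
  under : Fin n → Fin (2 * n)
  sign_pm : ∀ c, sign c = 1 ∨ sign c = -1
  endpoints_inj : Function.Injective (Sum.elim over' under)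

namespace GaussDiagram

variable (G : GaussDiagram)

/-- Position `p` lies strictly between the two endpoints of chord `c`,
i.e. on the side of `c` NOT containing the endpoints of the arc
(the complement of the lead side of `c`). -/
def between (c : Fin G.n) (p : Fin (2 * G.n)) : Prop :=
  min (G.over' c).val (G.under c).val < p.val ∧ p.val < max (G.over' c).val (G.under c).val

instance (c : Fin G.n) (p : Fin (2 * G.n)) : Decidable (G.between c p) := by
  unfold between; infer_instance

/-- Chord `e` crosses chord `c`: exactly one endpoint of `e` lies between the endpoints of `c`. -/
def crosses (c e : Fin G.n) : Prop :=
  e ≠ c ∧ (G.between c (G.over' e) ↔ ¬ G.between c (G.under e))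

instance (c e : Fin G.n) : Decidable (G.crosses c e) := by
  unfold crosses; infer_instance

/-- The signed contribution of the endpoints of chord `e` lying on the lead side of `c`
(the over-endpoint counts `sign e`, the under-endpoint counts `- sign e`). -/
def contrib (c e : Fin G.n) : ℤ :=
  (if ¬ G.between c (G.over' e) then G.sign e else 0)
    + (if ¬ G.between c (G.under e) then - G.sign e else 0)

/-- The intersection index `i(c)`: the sum of the signs of the chord-endpoints lying on
the lead side of `c`, excluding the endpoints of `c` itself. -/
def i (c : Fin G.n) : ℤ := ∑ e ∈ Finset.univ.erase c, G.contrib c e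

/-- `r(c)`: chords crossing `c` whose over-endpoint lies on the lead side of `c`
(chords pointing away from the lead side). -/
def rset (c : Fin G.n) : Finset (Fin G.n) :=
  Finset.univ.filter fun e => G.crosses c e ∧ ¬ G.between c (G.over' e)

/-- `l(c)`: chords crossing `c` whose under-endpoint lies on the lead side of `c`
(chords pointing toward the lead side). -/
def lset (c : Fin G.n) : Finset (Fin G.n) :=
  Finset.univ.filter fun e => G.crosses c e ∧ ¬ G.between c (G.under e)

end GaussDiagram

/-- The reduction map `φ` modulo `m`, realized by canonical representatives in `ℤ`:
for `m ≠ 0` it picks the representative in `[0, m)`; for `m = 0` it is the identity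
(no reduction, matching `ℤ[v,v⁻¹]/(v⁰ - 1) = ℤ[v,v⁻¹]`). -/
def redExp (m : ℕ) (k : ℤ) : ℤ := if m = 0 then k else k % (m : ℤ)

namespace GaussDiagram

variable (G : GaussDiagram)

/-- The index function `g_c(v) = Σ_{r ∈ r(c)} sign(r) v^{φ_c(i(r))} - Σ_{l ∈ l(c)} sign(l) v^{φ_c(-i(l))}`,
an element of `ℤ[v,v⁻¹]/(v^{|i(c)|} - 1)` realized via canonical exponent representatives. -/
noncomputable def gfun (c : Fin G.n) : LaurentExp :=
  (∑ e ∈ G.rset c, G.sign e • Finsupp.single (redExp (G.i c).natAbs (G.i e)) (1 : ℤ))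
    - ∑ e ∈ G.lset c, G.sign e • Finsupp.single (redExp (G.i c).natAbs (- G.i e)) (1 : ℤ)

/-- The F-polynomial `F_G(u,v) = Σ_c sign(c) (u^{g_c(v)} - 1)`. -/
noncomputable def F : FPoly :=
  ∑ c : Fin G.n, G.sign c • (Finsupp.single (G.gfun c) (1 : ℤ) - Finsupp.single 0 1)

end GaussDiagram

/-- The position-reversal map on the arc. -/
def revPos (n : ℕ) (p : Fin (2 * n)) : Fin (2 * n) :=
  ⟨2 * n - 1 - p.val, by have := p.isLt; omega⟩

/-- The Gauss diagram `-G` of the inverse knotoid: the orientation of the underlying arc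
is reversed (positions are reversed), while each chord keeps its sign and its direction
(over-endpoint to under-endpoint). -/
def GaussDiagram.reverse (G : GaussDiagram) : GaussDiagram where
  n := G.n
  sign := G.sign
  over' c := revPos G.n (G.over' c)
  under c := revPos G.n (G.under c)
  sign_pm := G.sign_pm
  endpoints_inj := by
    have hrev : Function.Injective (revPos G.n) := by
      intro p q h
      have hp := p.isLt; have hq := q.isLt
      have h' : 2 * G.n - 1 - p.val = 2 * G.n - 1 - q.val := congrArg Fin.val h
      exact Fin.ext (by omega)
    intro x y h
    apply G.endpoints_inj
    cases x <;> cases y <;>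
      simp only [Sum.elim_inl, Sum.elim_inr] at h ⊢ <;> exact hrev h

namespace GaussDiagram

variable (G : GaussDiagram)

@[simp]
theorem reverse_sign (c : Fin G.n) : G.reverse.sign c = G.sign c := rfl

-- `revPos` reverses order, so it swaps the `min` and `max` of the endpoints of `c`.
theorem reverse_between_revPos (c : Fin G.n) (p : Fin (2 * G.n)) :
    G.reverse.between c (revPos G.n p) ↔ G.between c p := by
  have := (G.over' c).isLt
  have := (G.under c).isLt
  have := p.isLt
  simp only [between, reverse, revPos]
  omega

@[simp]
theorem reverse_between_over' (c e : Fin G.n) :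
    G.reverse.between c (G.reverse.over' e) ↔ G.between c (G.over' e) :=
  G.reverse_between_revPos c (G.over' e)

@[simp]
theorem reverse_between_under (c e : Fin G.n) :
    G.reverse.between c (G.reverse.under e) ↔ G.between c (G.under e) :=
  G.reverse_between_revPos c (G.under e)

@[simp]
theorem reverse_crosses (c e : Fin G.n) : G.reverse.crosses c e ↔ G.crosses c e := by
  simp only [crosses, reverse_between_over', reverse_between_under]
  rfl

@[simp]
theorem reverse_contrib (c e : Fin G.n) : G.reverse.contrib c e = G.contrib c e := by
  simp only [contrib, reverse_between_over', reverse_between_under, reverse_sign]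

@[simp]
theorem reverse_i (c : Fin G.n) : G.reverse.i c = G.i c :=
  Finset.sum_congr rfl fun e _ => G.reverse_contrib c e

@[simp]
theorem reverse_lset (c : Fin G.n) : G.reverse.lset c = G.lset c := by
  unfold lset
  congr 1
  funext e
  exact propext <| and_congr (G.reverse_crosses c e) (not_congr (G.reverse_between_under c e))

@[simp]
theorem reverse_rset (c : Fin G.n) : G.reverse.rset c = G.rset c := by
  unfold rset
  congr 1
  funext e
  exact propext <| and_congr (G.reverse_crosses c e) (not_congr (G.reverse_between_over' c e))

@[simp]
theorem reverse_gfun (c : Fin G.n) : G.reverse.gfun c = G.gfun c := by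
  unfold gfun
  rw [reverse_lset, reverse_rset, reverse_i]
  congr 1 <;> refine Finset.sum_congr rfl fun e _ => ?_ <;> rw [G.reverse_i e] <;> rfl

@[simp]
theorem reverse_F : G.reverse.F = G.F :=
  Finset.sum_congr rfl fun c _ => by rw [G.reverse_gfun c]; rfl

end GaussDiagram

/-- for the orientation-reversed Gauss diagram `-G`, every chord `c` (with
corresponding chord `c'` in `-G`) satisfies `sign(c') = sign(c)`, `i(c') = i(c)`,
`l(c') = l(c)`, `r(c') = r(c)` and `g_{c'}(v) = g_c(v)`; consequently
`F_{-G}(u,v) = F_G(u,v)`. -/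
theorem reverse_invariance (G : GaussDiagram) :
    (∀ c : Fin G.n, G.reverse.sign c = G.sign c) ∧
    (∀ c : Fin G.n, G.reverse.i c = G.i c) ∧
    (∀ c : Fin G.n, G.reverse.lset c = G.lset c) ∧
    (∀ c : Fin G.n, G.reverse.rset c = G.rset c) ∧
    (∀ c : Fin G.n, G.reverse.gfun c = G.gfun c) ∧
    G.reverse.F = G.F :=
  ⟨G.reverse_sign, G.reverse_i, G.reverse_lset, G.reverse_rset, G.reverse_gfun, G.reverse_F⟩
end

section
/- For the proper knotoid diagram D of knotoid 5.1.26, whose Gauss diagram has five chords a, b, c, d, e, the F-polynomial vanishes, F_D(u,v) = 0, even though D is not a knot-type knotoid. Concretely, with the sign and crossing data of this diagram each chord c satisfies sign(c)(u^{g_c(v)} − 1) summing to zero over all chords. Hence the vanishing F_D(u,v) = 0 does not imply knot-type: the converse of the statement 'knot-type implies F_D(u,v) = 0' is false. -/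
open Finsupp

/-- The Gauss diagram of the proper knotoid diagram `D` of knotoid 5.1.26 of
Bartholomew's table: five chords `a, b, c, d, e` (indexed `0,…,4`), read off from the
planar diagram by traversing it from tail to head. -/
def D526 : GaussDiagram where
  n := 5
  sign := ![1, -1, -1, 1, -1]
  over' := fun c => Fin.cast (by norm_num) ((![0, 8, 2, 3, 5] : Fin 5 → Fin 10) c)
  under := fun c => Fin.cast (by norm_num) ((![6, 1, 4, 9, 7] : Fin 5 → Fin 10) c)
  sign_pm := by decide
  endpoints_inj := by decide

/-!
The index functions of `D` are `g_a = g_c = -1`, `g_b = 0` and `g_d = g_e = 1`: every chord but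
`b` has `|i| = 1`, so its index function lives in `ℤ[v,v⁻¹]/(v - 1) ≅ ℤ`, while for `b` the two
monomials `v^{i(a)}` and `v^{-i(d)}` cancel. Since `a, c` and `d, e` carry opposite signs, the
terms of `F_D` cancel in pairs, whereas `i(a) = -1` shows that `D` is not of knot-type.
-/

namespace GaussDiagram

variable (G : GaussDiagram)

theorem gfun_eq_single_zero_of_natAbs_i_eq_one {c : Fin G.n} {w : ℤ}
    (h : (G.i c).natAbs = 1)
    (hw : ∑ e ∈ G.rset c, G.sign e - ∑ e ∈ G.lset c, G.sign e = w) :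
    G.gfun c = single 0 w := by
  simp [gfun, h, redExp, ← hw, single_sub, single_finsetSum]

theorem gfun_of_i_eq_zero {c : Fin G.n} (h : G.i c = 0) :
    G.gfun c = ∑ e ∈ G.rset c, G.sign e • single (G.i e) 1
      - ∑ e ∈ G.lset c, G.sign e • single (-G.i e) 1 := by
  simp [gfun, h, redExp]

end GaussDiagram

instance : NeZero D526.n := ⟨by decide⟩

theorem D526_gfun_a : D526.gfun 0 = single 0 (-1) :=
  D526.gfun_eq_single_zero_of_natAbs_i_eq_one (by decide) (by decide)

theorem D526_gfun_b : D526.gfun 1 = 0 := by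
  have hr : D526.rset 1 = {0} := by decide
  have hl : D526.lset 1 = {3} := by decide
  have ha : D526.i 0 = -1 := by decide
  have hd : D526.i 3 = 1 := by decide
  have hs : D526.sign 0 = D526.sign 3 := rfl
  rw [D526.gfun_of_i_eq_zero (by decide), hr, hl, Finset.sum_singleton, Finset.sum_singleton,
    ha, hd, hs, sub_self]

theorem D526_gfun_c : D526.gfun 2 = single 0 (-1) :=
  D526.gfun_eq_single_zero_of_natAbs_i_eq_one (by decide) (by decide)

theorem D526_gfun_d : D526.gfun 3 = single 0 1 :=
  D526.gfun_eq_single_zero_of_natAbs_i_eq_one (by decide) (by decide)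

theorem D526_gfun_e : D526.gfun 4 = single 0 1 :=
  D526.gfun_eq_single_zero_of_natAbs_i_eq_one (by decide) (by decide)

theorem D526_F_eq_zero : D526.F = 0 := by
  have huniv : (Finset.univ : Finset (Fin D526.n)) = {0, 1, 2, 3, 4} := by decide
  have hac : D526.sign 2 = -D526.sign 0 := rfl
  have hde : D526.sign 4 = -D526.sign 3 := rfl
  rw [GaussDiagram.F, huniv]
  simp +decide [Finset.sum_insert, D526_gfun_a, D526_gfun_b, D526_gfun_c, D526_gfun_d,
    D526_gfun_e, hac, hde]

/-- for the proper knotoid diagram `D` of 5.1.26 the F-polynomial vanishes,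
`F_D(u,v) = 0`, even though `D` is not of knot-type (not all of its intersection indices
vanish).  Hence the converse of `knot-type ⟹ F_D(u,v) = 0` is false. -/
theorem D526_F_zero_but_not_knot_type :
    D526.F = 0 ∧ ¬ (∀ c : Fin D526.n, D526.i c = 0) :=
  ⟨D526_F_eq_zero, fun h => absurd (h 0) (by decide)⟩
end
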